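/- arXiv:2511.14955 — 2 statements merged into one kernel-verified Lean document; each statement's English description precedes it below -/
import Mathlib

section
/- Let p, p̂ be two probability vectors over a finite index set of size D, with p sorted so p_1 ≥ ... ≥ p_D. Let K be the set of indices of the k largest entries of p and K̂ a set of indices of k largest entries of p̂ (ties broken arbitrarily). Then |∑_{i∈K} p_i − ∑_{j∈K̂} p_j| ≤ ∑_{i∈K∪K̂} |p_i − p̂_i|. -/
/-!
Write `A = K \ K̂` and `B = K̂ \ K`; these have the same size, and the sums over `K` and `K̂`
differ by `∑_A p - ∑_B p`. Every entry of `p` on `A` dominates every entry on `B`, and every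
entry of `p̂` on `B` dominates every entry on `A`, so comparing both to a common threshold gives
`0 ≤ ∑_A p - ∑_B p ≤ ∑_A (p - p̂) + ∑_B (p̂ - p)`.
-/

open Finset

namespace Finset

variable {ι M : Type*}

theorem sum_le_sum_of_card_eq_of_forall_le [AddCommMonoid M] [LinearOrder M]
    [IsOrderedAddMonoid M] {s t : Finset ι} {f : ι → M} (hcard : #s = #t)
    (h : ∀ i ∈ s, ∀ j ∈ t, f i ≤ f j) : ∑ i ∈ s, f i ≤ ∑ j ∈ t, f j := by
  rcases t.eq_empty_or_nonempty with rfl | ht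
  · rw [card_empty, card_eq_zero] at hcard
    simp [hcard]
  · calc ∑ i ∈ s, f i ≤ #s • t.inf' ht f :=
          sum_le_card_nsmul s f _ fun i hi => le_inf' ht f fun j hj => h i hi j hj
      _ = #t • t.inf' ht f := by rw [hcard]
      _ ≤ ∑ j ∈ t, f j := card_nsmul_le_sum t f _ fun j hj => inf'_le f hj

end Finset

def IsTopSet {ι α : Type*} [LE α] (f : ι → α) (s : Finset ι) : Prop :=
  ∀ i ∈ s, ∀ j ∉ s, f j ≤ f i

namespace IsTopSet

variable {ι M : Type*} [DecidableEq ι] [AddCommGroup M] [LinearOrder M] [IsOrderedAddMonoid M]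
  {p q : ι → M} {K L : Finset ι}

theorem sum_sdiff_le (hK : IsTopSet p K) (hcard : #K = #L) :
    ∑ j ∈ L \ K, p j ≤ ∑ i ∈ K \ L, p i :=
  sum_le_sum_of_card_eq_of_forall_le (card_sdiff_comm hcard.symm) fun j hj i hi =>
    hK i (mem_sdiff.mp hi).1 j (mem_sdiff.mp hj).2

theorem abs_sum_sub_sum_le (hK : IsTopSet p K) (hL : IsTopSet q L) (hcard : #K = #L) :
    |∑ i ∈ K, p i - ∑ j ∈ L, p j| ≤ ∑ i ∈ K ∪ L, |p i - q i| := by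
  have hsdiff : ∑ i ∈ K, p i - ∑ j ∈ L, p j = ∑ i ∈ K \ L, p i - ∑ j ∈ L \ K, p j :=
    sum_sdiff_sub_sum_sdiff.symm
  have hpA : ∑ j ∈ L \ K, p j ≤ ∑ i ∈ K \ L, p i := hK.sum_sdiff_le hcard
  have hqB : ∑ i ∈ K \ L, q i ≤ ∑ j ∈ L \ K, q j := hL.sum_sdiff_le hcard.symm
  have hA : ∑ i ∈ K \ L, (p i - q i) ≤ ∑ i ∈ K \ L, |p i - q i| :=
    sum_le_sum fun i _ => le_abs_self _
  have hB : ∑ i ∈ L \ K, (q i - p i) ≤ ∑ i ∈ L \ K, |p i - q i| :=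
    sum_le_sum fun i _ => abs_sub_comm (p i) (q i) ▸ le_abs_self _
  have hAB : ∑ i ∈ K \ L, |p i - q i| + ∑ i ∈ L \ K, |p i - q i| ≤ ∑ i ∈ K ∪ L, |p i - q i| := by
    rw [← sum_union disjoint_sdiff_sdiff]
    exact sum_le_sum_of_subset_of_nonneg (union_subset_union sdiff_subset sdiff_subset)
      fun i _ _ => abs_nonneg _
  rw [hsdiff, abs_le]
  constructor
  · exact (neg_nonpos.mpr (sum_nonneg fun i _ => abs_nonneg _)).trans (sub_nonneg.mpr hpA)
  · calc ∑ i ∈ K \ L, p i - ∑ j ∈ L \ K, p j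
        = ∑ i ∈ K \ L, (p i - q i) + (∑ i ∈ K \ L, q i - ∑ j ∈ L \ K, q j)
          + ∑ j ∈ L \ K, (q j - p j) := by
          simp only [sum_sub_distrib]; abel
      _ ≤ ∑ i ∈ K \ L, |p i - q i| + 0 + ∑ j ∈ L \ K, |p j - q j| :=
          add_le_add (add_le_add hA (sub_nonpos.mpr hqB)) hB
      _ ≤ ∑ i ∈ K ∪ L, |p i - q i| := by rwa [add_zero]

end IsTopSet

theorem stmt_7_general (D k : ℕ) (p phat : Fin D → ℝ)
    (K Khat : Finset (Fin D)) (hK : K.card = k) (hKhat : Khat.card = k)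
    (htopK : ∀ i ∈ K, ∀ j ∉ K, p j ≤ p i)
    (htopKhat : ∀ i ∈ Khat, ∀ j ∉ Khat, phat j ≤ phat i) :
    |∑ i ∈ K, p i - ∑ j ∈ Khat, p j| ≤ ∑ i ∈ K ∪ Khat, |p i - phat i| :=
  IsTopSet.abs_sum_sub_sum_le htopK htopKhat (hK.trans hKhat.symm)

/-- Top-`k` index-set stability: if `p` is sorted decreasingly, `K` is a set of
indices of `k` largest entries of `p` and `K̂` of `k` largest entries of `p̂`, then
`|∑_{i∈K} p_i − ∑_{j∈K̂} p_j| ≤ ∑_{i∈K∪K̂} |p_i − p̂_i|`. -/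
theorem stmt_7 (D k : ℕ) (p phat : Fin D → ℝ)
    (hp0 : ∀ i, 0 ≤ p i) (hp1 : ∑ i, p i = 1)
    (hphat0 : ∀ i, 0 ≤ phat i) (hphat1 : ∑ i, phat i = 1)
    (hsorted : ∀ i j : Fin D, i ≤ j → p j ≤ p i)
    (K Khat : Finset (Fin D)) (hK : K.card = k) (hKhat : Khat.card = k)
    (htopK : ∀ i ∈ K, ∀ j ∉ K, p j ≤ p i)
    (htopKhat : ∀ i ∈ Khat, ∀ j ∉ Khat, phat j ≤ phat i) :
    |∑ i ∈ K, p i - ∑ j ∈ Khat, p j| ≤ ∑ i ∈ K ∪ Khat, |p i - phat i| :=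
  stmt_7_general D k p phat K Khat hK hKhat htopK htopKhat
end

section
/- Let X be a multinomial sample of size N over D categories with probabilities p_1 ≥ ... ≥ p_D, empirical frequencies p̂_i = X_i/N, and let p̂_{(1)} ≥ ... ≥ p̂_{(D)} be the empirical frequencies in decreasing order. For any δ > 0, with probability at least 1 − δ, |∑_{i=1}^k p̂_{(i)} − ∑_{i=1}^k p_i| ≤ 4√(k² ln(2D/δ)/(2N)). -/
/-!
Hoeffding's inequality for the indicators of `Y j = i`, applied to both tails and combined with a
union bound over the `D` categories, shows that with probability at least `1 - δ` every empirical
frequency is within `ε = √(ln (2D/δ) / (2N))` of `p i`. On that event each `k`-set sum moves by at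
most `kε`, hence so does their maximum, the empirical top-`k` mass; for sorted `p` the true maximum
is attained at the first `k` indices.
-/

open MeasureTheory Finset ProbabilityTheory Real
open scoped NNReal

lemma Finset.sum_le_sum_of_card_eq_of_forall_le_s10 {ι M : Type*} [AddCommMonoid M] [LinearOrder M]
    [IsOrderedAddMonoid M] {s t : Finset ι} {f : ι → M} (hcard : #s = #t)
    (h : ∀ i ∈ s, ∀ j ∈ t, f i ≤ f j) : ∑ i ∈ s, f i ≤ ∑ j ∈ t, f j := by
  rcases t.eq_empty_or_nonempty with rfl | ht
  · simp_all
  calc ∑ i ∈ s, f i ≤ #s • t.inf' ht f :=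
        sum_le_card_nsmul _ _ _ fun i hi => le_inf' ht f fun j hj => h i hi j hj
    _ ≤ ∑ j ∈ t, f j := hcard ▸ card_nsmul_le_sum _ _ _ fun j hj => inf'_le f hj

lemma Fin.sum_le_sum_filter_val_lt_of_antitone {D k : ℕ} {M : Type*} [AddCommMonoid M]
    [LinearOrder M] [IsOrderedCancelAddMonoid M] {p : Fin D → M} (hp : Antitone p)
    {K : Finset (Fin D)} (hK : #K = k) : ∑ i ∈ K, p i ≤ ∑ i with i.val < k, p i := by
  classical
  have hkD : k ≤ D := hK ▸ (card_le_univ K).trans_eq (Fintype.card_fin D)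
  rw [← sum_sdiff_le_sum_sdiff]
  refine sum_le_sum_of_card_eq_of_forall_le_s10 ?_ fun i hi j hj => hp ?_
  · rw [card_sdiff_eq_card_sdiff_iff, hK, Fin.card_filter_val_lt, min_eq_right hkD]
  · simp only [mem_sdiff, mem_filter, mem_univ, true_and] at hi hj
    exact Fin.le_def.mpr (by omega)

lemma Finset.abs_sup'_sub_sup'_le {ι : Type*} {s : Finset ι} (hs : s.Nonempty) {f g : ι → ℝ}
    {ε : ℝ} (h : ∀ i ∈ s, |f i - g i| ≤ ε) : |s.sup' hs f - s.sup' hs g| ≤ ε := by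
  have key : ∀ f g : ι → ℝ, (∀ i ∈ s, |f i - g i| ≤ ε) → s.sup' hs f ≤ s.sup' hs g + ε :=
    fun f g h => sup'_le hs f fun i hi => by
      linarith [le_sup' g hi, (abs_le.mp (h i hi)).2]
  rw [abs_sub_le_iff]
  constructor
  · linarith [key f g h]
  · linarith [key g f fun i hi => abs_sub_comm (f i) (g i) ▸ h i hi]

lemma Fin.abs_sup'_powersetCard_sum_sub_sum_filter_val_lt_le {D k : ℕ}
    (hk : (univ.powersetCard k : Finset (Finset (Fin D))).Nonempty) {p q : Fin D → ℝ}
    (hp : Antitone p) {ε : ℝ} (hpq : ∀ i, |q i - p i| ≤ ε) :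
    |(univ.powersetCard k).sup' hk (fun K => ∑ i ∈ K, q i) - ∑ i with i.val < k, p i|
      ≤ k * ε := by
  have htop :
      (univ.powersetCard k).sup' hk (fun K => ∑ i ∈ K, p i) = ∑ i with i.val < k, p i := by
    refine le_antisymm (sup'_le hk _ fun K hK => ?_) (le_sup' (fun K => ∑ i ∈ K, p i) ?_)
    · exact sum_le_sum_filter_val_lt_of_antitone hp (mem_powersetCard.mp hK).2
    · obtain ⟨K, hK⟩ := hk
      have hkD : k ≤ D :=
        (mem_powersetCard.mp hK).2 ▸ (card_le_univ K).trans_eq (Fintype.card_fin D)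
      rw [mem_powersetCard, Fin.card_filter_val_lt, min_eq_right hkD]
      exact ⟨subset_univ _, rfl⟩
  rw [← htop]
  refine abs_sup'_sub_sup'_le hk fun K hK => ?_
  rw [← sum_sub_distrib, ← (mem_powersetCard.mp hK).2, ← nsmul_eq_mul]
  exact (abs_sum_le_sum_abs _ _).trans (sum_le_card_nsmul _ _ _ fun i _ => hpq i)

lemma measureReal_le_abs_sum_sub_integral_le {Ω ι : Type*} [MeasurableSpace Ω] {μ : Measure Ω}
    [IsProbabilityMeasure μ] {X : ι → Ω → ℝ} (hindep : iIndepFun X μ)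
    (hmeas : ∀ i, AEMeasurable (X i) μ) (hX : ∀ i, ∀ᵐ ω ∂μ, X i ω ∈ Set.Icc 0 1)
    (s : Finset ι) {ε : ℝ} (hε : 0 ≤ ε) :
    μ.real {ω | ε ≤ |∑ i ∈ s, (X i ω - μ[X i])|} ≤ 2 * exp (-2 * ε ^ 2 / #s) := by
  set Z : ι → Ω → ℝ := fun i ω => X i ω - μ[X i]
  have hZ : ∀ i ∈ s, HasSubgaussianMGF (Z i) 4⁻¹ μ := fun i _ => by
    simpa [Z, show (2 : ℝ≥0) ^ 2 = 4 by norm_num] using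
      hasSubgaussianMGF_of_mem_Icc (hmeas i) (hX i)
  have hZindep : iIndepFun Z μ :=
    hindep.comp (fun i (y : ℝ) => y - ∫ ω, X i ω ∂μ) fun i => measurable_id.sub_const _
  have htail : ∀ W : ι → Ω → ℝ, iIndepFun W μ → (∀ i ∈ s, HasSubgaussianMGF (W i) 4⁻¹ μ) →
      μ.real {ω | ε ≤ ∑ i ∈ s, W i ω} ≤ exp (-2 * ε ^ 2 / #s) := fun W hW hWs => by
    refine (HasSubgaussianMGF.measure_sum_ge_le_of_iIndepFun hW hWs hε).trans_eq ?_
    congr 1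
    push_cast [sum_const, nsmul_eq_mul]
    field_simp
    ring
  calc μ.real {ω | ε ≤ |∑ i ∈ s, Z i ω|}
      ≤ μ.real ({ω | ε ≤ ∑ i ∈ s, Z i ω} ∪ {ω | ε ≤ ∑ i ∈ s, (-Z i) ω}) := by
        refine measureReal_mono fun ω (hω : ε ≤ |_|) => ?_
        show ε ≤ _ ∨ ε ≤ _
        simpa only [Pi.neg_apply, sum_neg_distrib] using le_abs.mp hω
    _ ≤ exp (-2 * ε ^ 2 / #s) + exp (-2 * ε ^ 2 / #s) :=
        (measureReal_union_le _ _).trans (add_le_add (htail Z hZindep hZ)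
          (htail (fun i => -Z i) (hZindep.comp (fun _ x => -x) fun _ => measurable_neg)
            fun i hi => (hZ i hi).neg))
    _ = 2 * exp (-2 * ε ^ 2 / #s) := by ring

lemma measureReal_le_abs_freq_sub_le {Ω ι α : Type*} [MeasurableSpace Ω] {μ : Measure Ω}
    [IsProbabilityMeasure μ] [Fintype ι] [Nonempty ι] [MeasurableSpace α]
    [MeasurableSingletonClass α] [DecidableEq α] {Y : ι → Ω → α} (hmeas : ∀ j, Measurable (Y j))
    (hindep : iIndepFun Y μ) {a : α} {r : ℝ} (hr : ∀ j, μ.real {ω | Y j ω = a} = r)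
    {ε : ℝ} (hε : 0 ≤ ε) :
    μ.real {ω | ε ≤ |(#{j | Y j ω = a} : ℝ) / Fintype.card ι - r|}
      ≤ 2 * exp (-2 * Fintype.card ι * ε ^ 2) := by
  set n : ℝ := (Fintype.card ι : ℝ)
  have hn : 0 < n := by positivity
  set X : ι → Ω → ℝ := fun j => (Y j ⁻¹' {a}).indicator 1
  have hXmeas : ∀ j, Measurable (X j) := fun j =>
    measurable_one.indicator (hmeas j (measurableSet_singleton a))
  have hXindep : iIndepFun X μ :=
    hindep.comp (fun _ => ({a} : Set α).indicator 1)
      fun _ => measurable_one.indicator (measurableSet_singleton a)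
  have hXbound : ∀ j, ∀ᵐ ω ∂μ, X j ω ∈ Set.Icc 0 1 := fun j => ae_of_all _ fun ω => by
    by_cases h : Y j ω = a <;> simp [X, h]
  have hXmean : ∀ j, μ[X j] = r := fun j => by
    rw [integral_indicator_one (hmeas j (measurableSet_singleton a))]
    exact hr j
  have hcount : ∀ ω, ∑ j, X j ω = #{j | Y j ω = a} := fun ω => by
    simp [X, Set.indicator]
  have hsum : ∀ ω, ∑ j, (X j ω - μ[X j]) = n * ((#{j | Y j ω = a} : ℝ) / n - r) := fun ω => by
    rw [sum_sub_distrib, hcount]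
    simp only [hXmean, sum_const, card_univ, nsmul_eq_mul]
    field_simp
    ring
  calc μ.real {ω | ε ≤ |(#{j | Y j ω = a} : ℝ) / n - r|}
      = μ.real {ω | n * ε ≤ |∑ j, (X j ω - μ[X j])|} := by
        congr 1
        ext ω
        simp only [Set.mem_ofPred_eq, hsum, abs_mul, abs_of_pos hn, mul_le_mul_iff_right₀ hn]
    _ ≤ 2 * exp (-2 * (n * ε) ^ 2 / #univ) :=
        measureReal_le_abs_sum_sub_integral_le hXindep (fun j => (hXmeas j).aemeasurable)
          hXbound univ (by positivity)
    _ = 2 * exp (-2 * n * ε ^ 2) := by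
        rw [card_univ]
        change 2 * exp (-2 * (n * ε) ^ 2 / n) = _
        field_simp

lemma ofReal_one_sub_le_of_measureReal_compl_le {Ω : Type*} [MeasurableSpace Ω] {μ : Measure Ω}
    [IsProbabilityMeasure μ] {s : Set Ω} {δ : ℝ} (h : μ.real sᶜ ≤ δ) :
    ENNReal.ofReal (1 - δ) ≤ μ s := by
  have hcover : 1 ≤ μ.real s + μ.real sᶜ := by
    simpa [Set.union_compl_self] using measureReal_union_le (μ := μ) s sᶜ
  rw [← ofReal_measureReal]
  exact ENNReal.ofReal_le_ofReal (by linarith)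

/-- The multinomial sample is modelled by `N` independent draws `Y j` of a category, and the
empirical top-`k` mass as the largest sum of empirical frequencies over `k`-element sets. -/
theorem stmt_10 {Ω : Type*} [MeasureSpace Ω] [IsProbabilityMeasure (ℙ : Measure Ω)]
    (D N k : ℕ) (hD : 0 < D) (hN : 0 < N) (hkD : k ≤ D)
    (p : Fin D → ℝ)
    (hsorted : ∀ i j : Fin D, i ≤ j → p j ≤ p i)
    (Y : Fin N → Ω → Fin D) (hmeas : ∀ j, Measurable (Y j))
    (hindep : ProbabilityTheory.iIndepFun Y ℙ)
    (hlaw : ∀ j i, (ℙ {ω | Y j ω = i}).toReal = p i)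
    (δ : ℝ) (hδ : 0 < δ) :
    ENNReal.ofReal (1 - δ) ≤
      ℙ {ω |
        |((Finset.univ.powersetCard k).sup'
              (Finset.powersetCard_nonempty.mpr (by simpa using hkD))
              (fun K => ∑ i ∈ K,
                ((Finset.univ.filter (fun j => Y j ω = i)).card : ℝ) / N)) -
            ∑ i ∈ Finset.univ.filter (fun i : Fin D => i.val < k), p i| ≤
          4 * Real.sqrt ((k : ℝ) ^ 2 * Real.log (2 * D / δ) / (2 * N))} := by
  rcases le_or_gt 1 δ with hδ1 | hδ1
  · simp [ENNReal.ofReal_of_nonpos (sub_nonpos.mpr hδ1)]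
  have : Nonempty (Fin N) := ⟨⟨0, hN⟩⟩
  set L := log (2 * D / δ)
  set ε := √(L / (2 * N))
  have hL : 0 ≤ L := log_nonneg <| (one_le_div hδ).mpr <| by
    linarith [(Nat.one_le_cast (α := ℝ)).mpr hD]
  have htail : 2 * exp (-2 * N * ε ^ 2) = δ / D := by
    rw [sq_sqrt (by positivity), show -2 * (N : ℝ) * (L / (2 * N)) = -L by field_simp,
      exp_neg, exp_log (by positivity)]
    field_simp
  set Bad := ⋃ i, {ω | ε ≤ |(#{j | Y j ω = i} : ℝ) / N - p i|}
  have hBad : (ℙ : Measure Ω).real Bad ≤ δ := calc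
    (ℙ : Measure Ω).real Bad
        ≤ ∑ i, (ℙ : Measure Ω).real {ω | ε ≤ |(#{j | Y j ω = i} : ℝ) / N - p i|} :=
      measureReal_iUnion_fintype_le _
    _ ≤ ∑ _i : Fin D, δ / D := sum_le_sum fun i _ => by
      have := measureReal_le_abs_freq_sub_le (ε := ε) hmeas hindep (hlaw · i) (sqrt_nonneg _)
      rwa [Fintype.card_fin, htail] at this
    _ = δ := by simp [mul_div_cancel₀ δ (Nat.cast_ne_zero.mpr hD.ne')]
  refine ofReal_one_sub_le_of_measureReal_compl_le
    ((measureReal_mono (Set.compl_subset_comm.mp fun ω hω => ?_)).trans hBad)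
  simp only [Bad, Set.mem_compl_iff, Set.mem_iUnion, not_exists, Set.mem_ofPred_eq, not_le] at hω
  refine (Fin.abs_sup'_powersetCard_sum_sub_sum_filter_val_lt_le _ hsorted
    fun i => (hω i).le).trans ?_
  rw [mul_div_assoc, sqrt_mul (sq_nonneg _), sqrt_sq (Nat.cast_nonneg k)]
  linarith [mul_nonneg (Nat.cast_nonneg (α := ℝ) k) (sqrt_nonneg (L / (2 * N)))]
end
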